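/- arXiv:1711.02840 — 3 statements merged into one kernel-verified Lean document; each statement's English description precedes it below -/
import Mathlib

section
/- Uniqueness of quasi-power-series expansions (Proposition on formal series, Appendix A.1): Let G₀ be a finite subset of ℝ and let G = {a + m : a ∈ G₀, m ∈ ℕ}. Let n ≥ 1, let c : ℝⁿ → ℂ be a family of coefficients vanishing at every μ = (μ₁,…,μₙ) for which some μ_l ∉ G, and let r₁,…,rₙ > 0. Assume: (i) for every z = (z₁,…,zₙ) ∈ ℂⁿ with 0 < |z_l| < r_l for all l, the family μ ↦ ‖c(μ)‖ · ∏_{l=1}^n |z_l|^{μ_l} is summable; (ii) for each l = 1,…,n there is a sequence (z_l(m))_{m∈ℕ} of complex numbers with 0 < |z_l(m)| < r_l and z_l(m) → 0 as m → ∞; and (iii) for all m₁,…,mₙ ∈ ℕ, the sum ∑_{μ} c(μ) · ∏_{l=1}^n z_l(m_l)^{μ_l} (principal-branch complex powers) equals 0. Then c(μ) = 0 for every μ. -/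
/-!
Induct on the number of variables. In one variable, let `t₀` be the least exponent with
`d t₀ ≠ 0`; it exists because the admissible exponents `G₀ + ℕ` are well-founded. Then
`w ^ (-t₀) ∑ d t w ^ t` tends to `d t₀` as `w → 0` by dominated convergence, while it vanishes
along the sequence, so `d t₀ = 0`. For `n + 1` variables, summing out the last `n` variables
at fixed sample points turns the series into a one-variable series in the first variable, whose
coefficients therefore vanish; these vanishing coefficients are `n`-variable series to which the
induction hypothesis applies.
-/

open Filter Topology Function

theorem isWF_setOf_add_natCast (G₀ : Finset ℝ) :
    {x : ℝ | ∃ a ∈ G₀, ∃ m : ℕ, x = a + m}.IsWF := by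
  have hℕ : (Set.range ((↑) : ℕ → ℝ)).IsWF := by
    simpa only [Set.image_univ] using
      ((Set.isPWO_of_wellQuasiOrderedLE Set.univ).image_of_monotone Nat.mono_cast).isWF
  refine (G₀.finite_toSet.isWF.add hℕ).mono ?_
  rintro _ ⟨a, ha, m, rfl⟩
  exact Set.add_mem_add ha ⟨m, rfl⟩

lemma tendsto_cpow_ofReal_nhds_zero {ι : Type*} {l : Filter ι} {w : ι → ℂ}
    (hw : Tendsto w l (𝓝 0)) {p : ℝ} (hp : 0 < p) :
    Tendsto (fun i => w i ^ (p : ℂ)) l (𝓝 0) := by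
  have h := (Complex.continuousAt_cpow_const_of_re_pos (z := 0) (w := p) (by simp)
    (by simpa using hp)).tendsto.comp hw
  simpa [Function.comp_def, Complex.zero_cpow (Complex.ofReal_ne_zero.mpr hp.ne')] using h

theorem eq_zero_of_eventually_tsum_mul_cpow_eq_zero {d : ℝ → ℂ} (hd : (support d).IsWF)
    {ρ : ℝ} (hρ : 0 < ρ) (hsum : Summable fun t => ‖d t‖ * ρ ^ t)
    {ι : Type*} {l : Filter ι} [l.NeBot] {w : ι → ℂ} (hw : Tendsto w l (𝓝[≠] 0))
    (hvanish : ∀ᶠ i in l, ∑' t, d t * w i ^ (t : ℂ) = 0) : d = 0 := by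
  by_contra hne
  have hsupp : (support d).Nonempty := support_nonempty_iff.mpr hne
  set t₀ := hd.min hsupp
  have ht₀ : d t₀ ≠ 0 := hd.min_mem hsupp
  have hle : ∀ t, d t ≠ 0 → t₀ ≤ t := fun t ht => hd.min_le hsupp ht
  obtain ⟨hw0, hw_ne⟩ := tendsto_nhdsWithin_iff.mp hw
  let f : ι → ℝ → ℂ := fun i t => d t * w i ^ ((t - t₀ : ℝ) : ℂ)
  have hzero : ∀ᶠ i in l, ∑' t, f i t = 0 := by
    filter_upwards [hvanish, hw_ne] with i hi hwi
    simp only [f, Complex.ofReal_sub, Complex.cpow_sub _ _ hwi, mul_div_assoc', tsum_div_const, hi,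
      zero_div]
  have hbound : Summable fun t => ‖d t‖ * ρ ^ (t - t₀) := by
    simpa only [Real.rpow_sub hρ, mul_div_assoc'] using hsum.div_const (ρ ^ t₀)
  have hterm (t : ℝ) : Tendsto (f · t) l (𝓝 ((Pi.single t₀ (d t₀) : ℝ → ℂ) t)) := by
    rcases eq_or_ne t t₀ with rfl | ht
    · simp [f]
    rw [Pi.single_eq_of_ne ht]
    rcases eq_or_ne (d t) 0 with hdt | hdt
    · simp [f, hdt]
    have hlt : t₀ < t := (hle t hdt).lt_of_ne' ht
    simpa [f] using (tendsto_cpow_ofReal_nhds_zero hw0 (sub_pos.mpr hlt)).const_mul (d t)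
  have hdom : ∀ᶠ i in l, ∀ t, ‖f i t‖ ≤ ‖d t‖ * ρ ^ (t - t₀) := by
    filter_upwards [hw0.norm.eventually (ge_mem_nhds (by simpa using hρ))] with i hi t
    rw [norm_mul, Complex.norm_cpow_real]
    rcases eq_or_ne (d t) 0 with hdt | hdt
    · simp [hdt]
    · gcongr
      exact sub_nonneg.mpr (hle t hdt)
  have hlim := tendsto_tsum_of_dominated_convergence hbound hterm hdom
  rw [tsum_pi_single] at hlim
  exact ht₀ (tendsto_nhds_unique hlim (tendsto_const_nhds.congr' (hzero.mono fun i h => h.symm)))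

section FinCons

variable {E : Type*} [NormedAddCommGroup E] [CompleteSpace E] {n : ℕ}
  {f : (Fin (n + 1) → ℝ) → E}

theorem Summable.fin_cons_slice (hf : Summable f) (t : ℝ) :
    Summable fun ν => f (Fin.cons t ν) :=
  ((Fin.consEquiv _).summable_iff.mpr hf).prod_factor t

theorem Summable.fin_cons_marginal (hf : Summable f) :
    Summable fun t => ∑' ν, f (Fin.cons t ν) :=
  ((Fin.consEquiv _).summable_iff.mpr hf).prod

theorem Summable.tsum_fin_cons (hf : Summable f) :
    ∑' μ, f μ = ∑' t, ∑' ν, f (Fin.cons t ν) := by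
  rw [← (Fin.consEquiv _).tsum_eq]
  exact ((Fin.consEquiv _).summable_iff.mpr hf).tsum_prod

end FinCons

theorem norm_prod_cpow_ofReal {ι : Type*} [Fintype ι] (z : ι → ℂ) (μ : ι → ℝ) :
    ‖∏ l, z l ^ (μ l : ℂ)‖ = ∏ l, ‖z l‖ ^ μ l := by
  simp only [norm_prod, Complex.norm_cpow_real]

/-- The coefficient of `z₀ ^ t` in `∑ μ, c μ * (Fin.cons z₀ w) ^ μ`. -/
noncomputable def firstCoeff {n : ℕ} (c : (Fin (n + 1) → ℝ) → ℂ) (w : Fin n → ℂ) (t : ℝ) : ℂ :=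
  ∑' ν, c (Fin.cons t ν) * ∏ l, w l ^ (ν l : ℂ)

section FirstCoeff

variable {n : ℕ} {c : (Fin (n + 1) → ℝ) → ℂ} {z₀ : ℂ} {w : Fin n → ℂ}

theorem summable_norm_mul_prod_of_fin_cons (hz₀ : z₀ ≠ 0)
    (hc : Summable fun μ => ‖c μ‖ * ∏ l, ‖(Fin.cons z₀ w : Fin (n + 1) → ℂ) l‖ ^ μ l) (t : ℝ) :
    Summable fun ν => ‖c (Fin.cons t ν)‖ * ∏ l, ‖w l‖ ^ ν l := by
  have h := hc.fin_cons_slice t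
  simp only [Fin.prod_univ_succ, Fin.cons_zero, Fin.cons_succ, mul_left_comm ‖c _‖] at h
  exact (summable_mul_left_iff (by positivity)).mp h

theorem summable_norm_firstCoeff_mul_rpow (hz₀ : z₀ ≠ 0)
    (hc : Summable fun μ => ‖c μ‖ * ∏ l, ‖(Fin.cons z₀ w : Fin (n + 1) → ℂ) l‖ ^ μ l) :
    Summable fun t => ‖firstCoeff c w t‖ * ‖z₀‖ ^ t := by
  refine hc.fin_cons_marginal.of_nonneg_of_le (fun t => by positivity) fun t => ?_
  simp only [Fin.prod_univ_succ, Fin.cons_zero, Fin.cons_succ, mul_left_comm ‖c _‖, tsum_mul_left]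
  rw [mul_comm]
  gcongr
  refine (norm_tsum_le_tsum_norm ?_).trans_eq (tsum_congr fun ν => ?_)
  · simpa only [norm_mul, norm_prod_cpow_ofReal] using summable_norm_mul_prod_of_fin_cons hz₀ hc t
  · rw [norm_mul, norm_prod_cpow_ofReal]

theorem tsum_firstCoeff_mul_cpow
    (hc : Summable fun μ => ‖c μ‖ * ∏ l, ‖(Fin.cons z₀ w : Fin (n + 1) → ℂ) l‖ ^ μ l) :
    ∑' t, firstCoeff c w t * z₀ ^ (t : ℂ) =
      ∑' μ, c μ * ∏ l, (Fin.cons z₀ w : Fin (n + 1) → ℂ) l ^ (μ l : ℂ) := by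
  have hsum : Summable fun μ => c μ * ∏ l, (Fin.cons z₀ w : Fin (n + 1) → ℂ) l ^ (μ l : ℂ) :=
    .of_norm (by simpa only [norm_mul, norm_prod_cpow_ofReal] using hc)
  rw [hsum.tsum_fin_cons]
  refine tsum_congr fun t => ?_
  simp only [firstCoeff, Fin.prod_univ_succ, Fin.cons_zero, Fin.cons_succ, ← tsum_mul_right]
  exact tsum_congr fun ν => by ring

end FirstCoeff

theorem eq_zero_of_tsum_mul_prod_cpow_eq_zero {S : Set ℝ} (hS : S.IsWF) {n : ℕ}
    {c : (Fin n → ℝ) → ℂ} (hsupp : support c ⊆ Set.univ.pi fun _ => S)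
    (z : Fin n → ℕ → ℂ) (hz0 : ∀ l m, z l m ≠ 0) (hz : ∀ l, Tendsto (z l) atTop (𝓝 0))
    (hsum : ∀ m : Fin n → ℕ, Summable fun μ => ‖c μ‖ * ∏ l, ‖z l (m l)‖ ^ μ l)
    (hvanish : ∀ m : Fin n → ℕ, ∑' μ, c μ * ∏ l, z l (m l) ^ (μ l : ℂ) = 0) :
    c = 0 := by
  induction n with
  | zero =>
    have h := hvanish default
    simp only [Finset.univ_eq_empty, Finset.prod_empty, mul_one, tsum_fintype,
      Finset.univ_unique, Finset.sum_singleton] at h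
    exact funext fun μ => (congrArg c (Subsingleton.elim μ _)).trans h
  | succ n ih =>
    have hz_cons (m₀ : ℕ) (m' : Fin n → ℕ) (l : Fin (n + 1)) :
        z l ((Fin.cons m₀ m' : Fin (n + 1) → ℕ) l) =
          (Fin.cons (z 0 m₀) fun l => z l.succ (m' l) : Fin (n + 1) → ℂ) l := by
      cases l using Fin.cases <;> simp
    have hsum' (m₀ : ℕ) (m' : Fin n → ℕ) := by simpa only [hz_cons] using hsum (Fin.cons m₀ m')
    have hcoeff (m' : Fin n → ℕ) : firstCoeff c (fun l => z l.succ (m' l)) = 0 := by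
      refine eq_zero_of_eventually_tsum_mul_cpow_eq_zero (hS.mono ?_) (norm_pos_iff.mpr (hz0 0 0))
        (summable_norm_firstCoeff_mul_rpow (hz0 0 0) (hsum' 0 m'))
        (tendsto_nhdsWithin_iff.mpr ⟨hz 0, .of_forall (hz0 0)⟩) (.of_forall fun m₀ => ?_)
      · intro t ht
        obtain ⟨ν, hν⟩ : ∃ ν, c (Fin.cons t ν) ≠ 0 := by
          by_contra! h
          simp [firstCoeff, h] at ht
        simpa using hsupp hν 0 trivial
      · simpa only [tsum_firstCoeff_mul_cpow (hsum' m₀ m'), hz_cons] using hvanish (Fin.cons m₀ m')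
    funext μ
    rw [← Fin.cons_self_tail μ]
    refine congrFun (ih (c := fun ν => c (Fin.cons (μ 0) ν)) (fun ν hν l _ => ?_)
      (fun l => z l.succ) (fun l => hz0 l.succ) (fun l => hz l.succ)
      (fun m' => summable_norm_mul_prod_of_fin_cons (hz0 0 0) (hsum' 0 m') (μ 0))
      (fun m' => congrFun (hcoeff m') (μ 0))) (Fin.tail μ)
    simpa using hsupp hν l.succ trivial

theorem uniqueness_of_quasi_power_series_general
    (G₀ : Finset ℝ) (n : ℕ)
    (c : (Fin n → ℝ) → ℂ)
    (hsupp : ∀ μ : Fin n → ℝ,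
      (∃ l : Fin n, ¬ ∃ a ∈ G₀, ∃ m : ℕ, μ l = a + m) → c μ = 0)
    (r : Fin n → ℝ)
    (hconv : ∀ z : Fin n → ℂ,
      (∀ l, 0 < ‖z l‖ ∧ ‖z l‖ < r l) →
      Summable (fun μ : Fin n → ℝ => ‖c μ‖ * ∏ l, ‖z l‖ ^ (μ l)))
    (zseq : Fin n → ℕ → ℂ)
    (hzseq : ∀ l m, 0 < ‖zseq l m‖ ∧ ‖zseq l m‖ < r l)
    (hzlim : ∀ l, Filter.Tendsto (zseq l) Filter.atTop (nhds 0))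
    (hvanish : ∀ m : Fin n → ℕ,
      ∑' μ : Fin n → ℝ, c μ * ∏ l, (zseq l (m l)) ^ ((μ l : ℂ)) = 0) :
    ∀ μ : Fin n → ℝ, c μ = 0 := by
  have hc : c = 0 := by
    refine eq_zero_of_tsum_mul_prod_cpow_eq_zero (isWF_setOf_add_natCast G₀) (fun μ hμ l _ => ?_)
      zseq (fun l m => norm_pos_iff.mp (hzseq l m).1) hzlim
      (fun m => hconv _ fun l => hzseq l (m l)) hvanish
    by_contra hl
    exact hμ (hsupp μ ⟨l, hl⟩)
  exact congrFun hc

/-- Uniqueness of quasi-power-series expansions (Proposition A.1). -/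
theorem uniqueness_of_quasi_power_series
    (G₀ : Finset ℝ) (n : ℕ) (hn : 1 ≤ n)
    (c : (Fin n → ℝ) → ℂ)
    (hsupp : ∀ μ : Fin n → ℝ,
      (∃ l : Fin n, ¬ ∃ a ∈ G₀, ∃ m : ℕ, μ l = a + m) → c μ = 0)
    (r : Fin n → ℝ) (hr : ∀ l, 0 < r l)
    (hconv : ∀ z : Fin n → ℂ,
      (∀ l, 0 < ‖z l‖ ∧ ‖z l‖ < r l) →
      Summable (fun μ : Fin n → ℝ => ‖c μ‖ * ∏ l, ‖z l‖ ^ (μ l)))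
    (zseq : Fin n → ℕ → ℂ)
    (hzseq : ∀ l m, 0 < ‖zseq l m‖ ∧ ‖zseq l m‖ < r l)
    (hzlim : ∀ l, Filter.Tendsto (zseq l) Filter.atTop (nhds 0))
    (hvanish : ∀ m : Fin n → ℕ,
      ∑' μ : Fin n → ℝ, c μ * ∏ l, (zseq l (m l)) ^ ((μ l : ℂ)) = 0) :
    ∀ μ : Fin n → ℝ, c μ = 0 :=
  uniqueness_of_quasi_power_series_general G₀ n c hsupp r hconv zseq hzseq hzlim hvanish
end

section
/- One-variable case of the uniqueness of quasi-power-series expansions (proved in Appendix A.1): Let μ : ℕ → ℝ be a strictly increasing sequence of real numbers, c : ℕ → ℂ, and r > 0. Assume: (i) for every complex z with 0 < |z| < r, the series ∑_k ‖c_k‖ · |z|^{μ_k} converges; and (ii) there is a sequence (z_m)_{m∈ℕ} of complex numbers with 0 < |z_m| < r, z_m → 0, such that ∑_k c_k · z_m^{μ_k} = 0 (principal-branch complex powers) for every m. Then c_k = 0 for every k. -/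
/-!
Argue by strong induction on `k`. Once `c j = 0` for `j < k`, the vanishing of the series at
`z = z_m` isolates `c k z^{μ k}` against the tail over `j > k`; for `‖z‖ ≤ ρ`, a fixed radius of
absolute convergence, that tail is at most `(‖z‖ / ρ)^{μ (k+1)}` times a constant. Hence
`‖c k‖ ≤ C ‖z_m‖^{μ (k+1) - μ k}`, and the right side tends to `0` because `μ` is strictly
increasing.
-/

open Filter Topology

theorem norm_le_tsum_norm_nat_add_of_tsum_eq_zero {E : Type*} [NormedAddCommGroup E]
    [CompleteSpace E] {f : ℕ → E} (hf : Summable fun j => ‖f j‖) {k : ℕ}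
    (hlow : ∀ j < k, f j = 0) (h0 : ∑' j, f j = 0) :
    ‖f k‖ ≤ ∑' j, ‖f (j + (k + 1))‖ := by
  have hhead : ∑ j ∈ Finset.range (k + 1), f j = f k := by
    rw [Finset.sum_range_succ, Finset.sum_eq_zero fun j hj => hlow j (Finset.mem_range.1 hj),
      zero_add]
  have hsplit := (hf.of_norm).sum_add_tsum_nat_add (k + 1)
  rw [hhead, h0, add_eq_zero_iff_eq_neg] at hsplit
  rw [hsplit, norm_neg]
  exact norm_tsum_le_tsum_norm ((summable_nat_add_iff (k + 1)).2 hf)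

theorem Real.rpow_le_div_rpow_mul_rpow {x ρ a b : ℝ} (hx : 0 < x) (hxρ : x ≤ ρ) (hab : a ≤ b) :
    x ^ b ≤ (x / ρ) ^ a * ρ ^ b := by
  have hρ : 0 < ρ := hx.trans_le hxρ
  calc x ^ b = (x / ρ) ^ b * ρ ^ b := by
        rw [Real.div_rpow hx.le hρ.le, div_mul_cancel₀ _ (Real.rpow_pos_of_pos hρ b).ne']
    _ ≤ (x / ρ) ^ a * ρ ^ b := mul_le_mul_of_nonneg_right
        (Real.rpow_le_rpow_of_exponent_ge (div_pos hx hρ) ((div_le_one hρ).2 hxρ) hab)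
        (Real.rpow_pos_of_pos hρ b).le

theorem tsum_mul_rpow_le_div_rpow_mul_tsum {a ν : ℕ → ℝ} {ν₀ x ρ : ℝ} (ha : ∀ j, 0 ≤ a j)
    (hν : ∀ j, ν₀ ≤ ν j) (hx : 0 < x) (hxρ : x ≤ ρ) (hsum : Summable fun j => a j * ρ ^ ν j) :
    ∑' j, a j * x ^ ν j ≤ (x / ρ) ^ ν₀ * ∑' j, a j * ρ ^ ν j := by
  have hle : ∀ j, a j * x ^ ν j ≤ (x / ρ) ^ ν₀ * (a j * ρ ^ ν j) := fun j => by
    rw [mul_left_comm]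
    exact mul_le_mul_of_nonneg_left (Real.rpow_le_div_rpow_mul_rpow hx hxρ (hν j)) (ha j)
  have hsum' := hsum.mul_left ((x / ρ) ^ ν₀)
  rw [← hsum.tsum_mul_left]
  exact Summable.tsum_le_tsum hle
    (hsum'.of_nonneg_of_le (fun j => mul_nonneg (ha j) (Real.rpow_pos_of_pos hx _).le) hle) hsum'

theorem nonpos_of_mul_rpow_le_mul_rpow {α : Type*} {l : Filter α} [l.NeBot] {t : α → ℝ}
    (ht : Tendsto t l (𝓝[>] 0)) {a C p q : ℝ} (hpq : p < q)
    (h : ∀ᶠ i in l, a * t i ^ p ≤ C * t i ^ q) : a ≤ 0 := by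
  have hlim : Tendsto (fun i => C * t i ^ (q - p)) l (𝓝 0) := by
    have := ((Real.continuousAt_rpow_const 0 (q - p) (Or.inr (sub_pos.2 hpq).le)).tendsto.comp
      (tendsto_nhdsWithin_iff.1 ht).1).const_mul C
    rwa [Function.comp_def, Real.zero_rpow (sub_pos.2 hpq).ne', mul_zero] at this
  refine ge_of_tendsto hlim ?_
  filter_upwards [h, (tendsto_nhdsWithin_iff.1 ht).2] with i hi hti
  have htp : 0 < t i ^ p := Real.rpow_pos_of_pos hti p
  rw [Real.rpow_sub hti, mul_div_assoc']
  exact (le_div_iff₀ htp).2 hi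

theorem norm_mul_rpow_le_of_tsum_mul_cpow_eq_zero {c : ℕ → ℂ} {μ : ℕ → ℝ} (hμ : Monotone μ)
    {k : ℕ} (hlow : ∀ j < k, c j = 0) {z : ℂ} {ρ : ℝ} (hz : 0 < ‖z‖) (hzρ : ‖z‖ ≤ ρ)
    (hsum_z : Summable fun j => ‖c j‖ * ‖z‖ ^ μ j) (hsum_ρ : Summable fun j => ‖c j‖ * ρ ^ μ j)
    (h0 : ∑' j, c j * z ^ (μ j : ℂ) = 0) :
    ‖c k‖ * ‖z‖ ^ μ k ≤ (‖z‖ / ρ) ^ μ (k + 1) * ∑' j, ‖c (j + (k + 1))‖ * ρ ^ μ (j + (k + 1)) := by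
  have hnorm : ∀ j, ‖c j * z ^ (μ j : ℂ)‖ = ‖c j‖ * ‖z‖ ^ μ j := fun j => by
    rw [norm_mul, Complex.norm_cpow_real]
  calc ‖c k‖ * ‖z‖ ^ μ k = ‖c k * z ^ (μ k : ℂ)‖ := (hnorm k).symm
    _ ≤ ∑' j, ‖c (j + (k + 1)) * z ^ (μ (j + (k + 1)) : ℂ)‖ :=
        norm_le_tsum_norm_nat_add_of_tsum_eq_zero (by simpa only [hnorm] using hsum_z)
          (fun j hj => by rw [hlow j hj, zero_mul]) h0
    _ = ∑' j, ‖c (j + (k + 1))‖ * ‖z‖ ^ μ (j + (k + 1)) := by simp only [hnorm]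
    _ ≤ _ := tsum_mul_rpow_le_div_rpow_mul_tsum (fun _ => norm_nonneg _)
        (fun j => hμ (Nat.le_add_left _ _)) hz hzρ
        ((summable_nat_add_iff (f := fun j => ‖c j‖ * ρ ^ μ j) (k + 1)).2 hsum_ρ)

theorem uniqueness_of_quasi_power_series_one_variable_general
    (μ : ℕ → ℝ) (hμ : StrictMono μ) (c : ℕ → ℂ) (r : ℝ)
    (hconv : ∀ z : ℂ, 0 < ‖z‖ → ‖z‖ < r →
      Summable (fun k : ℕ => ‖c k‖ * ‖z‖ ^ (μ k)))
    (zseq : ℕ → ℂ)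
    (hz : ∀ m : ℕ, 0 < ‖zseq m‖ ∧ ‖zseq m‖ < r)
    (hlim : Filter.Tendsto zseq Filter.atTop (nhds 0))
    (hvanish : ∀ m : ℕ, ∑' k : ℕ, c k * (zseq m) ^ ((μ k : ℂ)) = 0) :
    ∀ k : ℕ, c k = 0 := by
  have hsum : ∀ m, Summable fun j => ‖c j‖ * ‖zseq m‖ ^ μ j := fun m => hconv _ (hz m).1 (hz m).2
  have hnorm : Tendsto (fun m => ‖zseq m‖) atTop (𝓝[>] 0) :=
    tendsto_nhdsWithin_iff.2 ⟨by simpa using hlim.norm, .of_forall fun m => (hz m).1⟩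
  -- Any point of the sequence serves as the reference radius of absolute convergence.
  set ρ := ‖zseq 0‖
  intro k
  induction k using Nat.strong_induction_on with
  | _ k ih =>
    set S := ∑' j, ‖c (j + (k + 1))‖ * ρ ^ μ (j + (k + 1))
    refine norm_le_zero_iff.1 (nonpos_of_mul_rpow_le_mul_rpow hnorm (hμ k.lt_succ_self)
      (C := S / ρ ^ μ (k + 1)) ?_)
    filter_upwards [(tendsto_nhdsWithin_iff.1 hnorm).1.eventually (ge_mem_nhds (hz 0).1)]
      with m hm
    calc ‖c k‖ * ‖zseq m‖ ^ μ k ≤ (‖zseq m‖ / ρ) ^ μ (k + 1) * S :=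
          norm_mul_rpow_le_of_tsum_mul_cpow_eq_zero hμ.monotone ih (hz m).1 hm (hsum m) (hsum 0)
            (hvanish m)
      _ = S / ρ ^ μ (k + 1) * ‖zseq m‖ ^ μ (k + 1) := by
          rw [Real.div_rpow (hz m).1.le (hz 0).1.le]; ring

/-- One-variable case of the uniqueness of quasi-power-series expansions. -/
theorem uniqueness_of_quasi_power_series_one_variable
    (μ : ℕ → ℝ) (hμ : StrictMono μ) (c : ℕ → ℂ) (r : ℝ) (hr : 0 < r)
    (hconv : ∀ z : ℂ, 0 < ‖z‖ → ‖z‖ < r →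
      Summable (fun k : ℕ => ‖c k‖ * ‖z‖ ^ (μ k)))
    (zseq : ℕ → ℂ)
    (hz : ∀ m : ℕ, 0 < ‖zseq m‖ ∧ ‖zseq m‖ < r)
    (hlim : Filter.Tendsto zseq Filter.atTop (nhds 0))
    (hvanish : ∀ m : ℕ, ∑' k : ℕ, c k * (zseq m) ^ ((μ k : ℂ)) = 0) :
    ∀ k : ℕ, c k = 0 :=
  uniqueness_of_quasi_power_series_one_variable_general μ hμ c r hconv zseq hz hlim hvanish
end

section
/- Nonnegativity of weights of L₁-locally-nilpotent eigenvectors (general case of Proposition 1.11, positive energy): Let W be a complex inner product space and let L₋₁, L₀, L₁ be linear endomorphisms of W such that (i) ⟨L₋₁u, v⟩ = ⟨u, L₁v⟩ for all u, v ∈ W, (ii) L₁∘L₋₁ − L₋₁∘L₁ = 2·L₀, and (iii) L₀∘L₁ − L₁∘L₀ = −L₁. If w ∈ W is nonzero, s ∈ ℝ, L₀w = s·w, and there exists m ∈ ℕ with L₁^{m+1}w = 0 (iterated composition), then s ≥ 0. -/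
/-!
Going down the chain `w, L₁w, L₁²w, …` one reaches a nonzero vector `v = L₁ᵏw` with `L₁v = 0`.
Since `L₁` lowers the `L₀`-eigenvalue by one, `L₀v = (s - k)v`, and adjointness gives
`‖L₋₁v‖² = ⟨v, L₁L₋₁v⟩ = ⟨v, 2L₀v⟩ = 2(s - k)‖v‖²`, so `s ≥ s - k ≥ 0`.
-/

namespace Module.End

theorem exists_pow_apply_ne_zero_and_apply_eq_zero {R M : Type*} [Semiring R] [AddCommMonoid M]
    [Module R M] {f : Module.End R M} {w : M} (hw : w ≠ 0) :
    ∀ m : ℕ, (f ^ (m + 1)) w = 0 → ∃ k : ℕ, (f ^ k) w ≠ 0 ∧ f ((f ^ k) w) = 0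
  | 0, h => ⟨0, by simpa using hw, by simpa using h⟩
  | m + 1, h => by
    by_cases hm : (f ^ (m + 1)) w = 0
    · exact exists_pow_apply_ne_zero_and_apply_eq_zero hw m hm
    · exact ⟨m + 1, hm, by rwa [pow_succ', mul_apply] at h⟩

theorem apply_pow_apply_of_commutator_eq_neg {R M : Type*} [CommRing R] [AddCommGroup M]
    [Module R M] {A B : Module.End R M} (hAB : A ∘ₗ B - B ∘ₗ A = -B) {c : R} {w : M}
    (hw : A w = c • w) (n : ℕ) : A ((B ^ n) w) = (c - n) • (B ^ n) w := by
  have hAB' : ∀ x, A (B x) = B (A x) - B x := fun x => by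
    have := LinearMap.congr_fun hAB x
    simp only [LinearMap.sub_apply, LinearMap.comp_apply, LinearMap.neg_apply] at this
    rw [sub_eq_iff_eq_add.mp this]
    abel
  induction n with
  | zero => simpa using hw
  | succ n ih =>
    rw [pow_succ', mul_apply, hAB', ih, map_smul]
    push_cast
    module

end Module.End

theorem nonneg_of_apply_eq_zero_of_commutator_eq_smul {𝕜 W : Type*} [RCLike 𝕜]
    [NormedAddCommGroup W] [InnerProductSpace 𝕜 W] {Lm1 L0 L1 : Module.End 𝕜 W}
    (hadj : ∀ u v : W, inner 𝕜 (Lm1 u) v = inner 𝕜 u (L1 v))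
    (hcomm : L1 ∘ₗ Lm1 - Lm1 ∘ₗ L1 = (2 : 𝕜) • L0)
    {v : W} (hv : v ≠ 0) (hL1 : L1 v = 0) {t : ℝ} (hL0 : L0 v = (t : 𝕜) • v) : 0 ≤ t := by
  have hL1Lm1 : L1 (Lm1 v) = (2 : 𝕜) • L0 v := by
    simpa [hL1] using LinearMap.congr_fun hcomm v
  have hnorm : ‖Lm1 v‖ ^ 2 = 2 * t * ‖v‖ ^ 2 := by
    have h : (inner 𝕜 (Lm1 v) (Lm1 v) : 𝕜) = (2 * t : 𝕜) * inner 𝕜 v v := by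
      rw [hadj, hL1Lm1, hL0, smul_smul, inner_smul_right]
    rw [inner_self_eq_norm_sq_to_K, inner_self_eq_norm_sq_to_K] at h
    exact_mod_cast h
  have hv_pos : 0 < ‖v‖ ^ 2 := by positivity
  nlinarith [sq_nonneg ‖Lm1 v‖]

/-- Nonnegativity of weights of L₁-locally-nilpotent eigenvectors
(general case of Proposition 1.11, positive energy). -/
theorem locally_nilpotent_eigenvector_weight_nonneg
    {W : Type*} [NormedAddCommGroup W] [InnerProductSpace ℂ W]
    (Lm1 L0 L1 : Module.End ℂ W)
    (hadj : ∀ u v : W, (inner ℂ (Lm1 u) v : ℂ) = inner ℂ u (L1 v))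
    (hcomm : L1 ∘ₗ Lm1 - Lm1 ∘ₗ L1 = (2 : ℂ) • L0)
    (hcomm' : L0 ∘ₗ L1 - L1 ∘ₗ L0 = -L1)
    (w : W) (hw : w ≠ 0) (s : ℝ)
    (hL0 : L0 w = (s : ℂ) • w)
    (hnil : ∃ m : ℕ, (L1 ^ (m + 1)) w = 0) :
    0 ≤ s := by
  obtain ⟨m, hm⟩ := hnil
  obtain ⟨k, hv, hL1v⟩ := Module.End.exists_pow_apply_ne_zero_and_apply_eq_zero hw m hm
  have hL0v : L0 ((L1 ^ k) w) = ((s - k : ℝ) : ℂ) • (L1 ^ k) w := by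
    push_cast
    exact Module.End.apply_pow_apply_of_commutator_eq_neg hcomm' hL0 k
  have hk : 0 ≤ s - k := nonneg_of_apply_eq_zero_of_commutator_eq_smul hadj hcomm hv hL1v hL0v
  linarith [(Nat.cast_nonneg k : (0 : ℝ) ≤ k)]
end
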